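/- Let (Ω, ℙ) be a probability space, n, m ≥ 1, H ≥ 0, σ ≥ 0, and δ ∈ (0, 1]. Let T₁, …, Tₙ : Ω → (Fin m → ℝ) be independent, identically distributed random vectors, and let θ* ∈ (Fin m → ℝ) be fixed. Writing ‖v‖₁ = Σ_{k ∈ Fin m} |v(k)| for the ℓ1 norm, set Xᵢ(ω) = (H/2)·‖θ* − Tᵢ(ω)‖₁², and assume X₁ is square-integrable with Var(X₁) ≤ σ². Let L̄ ∈ ℝ (the true population loss of θ*) satisfy L̄ ≤ 𝔼[X₁]. Assume that almost surely θ* ∈ convexHull ℝ {T₁(ω), …, Tₙ(ω)}. Define the random quantity Ψ(ω) = (√H / n²) · Σ_{i,j ∈ [n]} ‖Tᵢ(ω) − Tⱼ(ω)‖₁. Then ℙ[ L̄ ≤ (n³/2)·Ψ² + σ/√(nδ) ] ≥ 1 − δ. -/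

import Mathlib

/-!
A convex combination is never farther from a point than the farthest of the points it combines,
so `θ*` in the convex hull of the `Tᵢ` gives `‖θ* − Tᵢ‖₁ ≤ ∑ⱼ ‖Tᵢ − Tⱼ‖₁`; squaring and summing
bounds the sample mean of the `Xᵢ` by `(n³/2)Ψ²` pointwise. The sample mean of the i.i.d. `Xᵢ`
has mean `𝔼[X₁] ≥ L̄` and variance at most `σ²/n`, so by Chebyshev it drops below
`𝔼[X₁] − σ/√(nδ)` with probability at most `δ`.
-/

open MeasureTheory ProbabilityTheory Finset

section ConvexHull

variable {E ι : Type*} [SeminormedAddCommGroup E] [NormedSpace ℝ E] [Fintype ι]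
  {v : ι → E} {θ : E}

lemma dist_le_sum_dist_of_mem_convexHull (hθ : θ ∈ convexHull ℝ (Set.range v)) (i : ι) :
    dist θ (v i) ≤ ∑ j, dist (v i) (v j) := by
  obtain ⟨_, ⟨j, rfl⟩, hj⟩ := convexHull_exists_dist_ge hθ (v i)
  rw [dist_comm (v j)] at hj
  exact hj.trans (single_le_sum (fun j _ => dist_nonneg) (mem_univ j))

lemma sum_sq_dist_le_sq_sum_dist_of_mem_convexHull (hθ : θ ∈ convexHull ℝ (Set.range v)) :
    ∑ i, dist θ (v i) ^ 2 ≤ (∑ i, ∑ j, dist (v i) (v j)) ^ 2 :=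
  calc ∑ i, dist θ (v i) ^ 2 ≤ ∑ i, (∑ j, dist (v i) (v j)) ^ 2 :=
        sum_le_sum fun i _ =>
          pow_le_pow_left₀ dist_nonneg (dist_le_sum_dist_of_mem_convexHull hθ i) 2
    _ ≤ (∑ i, ∑ j, dist (v i) (v j)) ^ 2 :=
        sum_sq_le_sq_sum_of_nonneg fun _ _ => sum_nonneg fun _ _ => dist_nonneg

end ConvexHull

section L1

variable {ι κ : Type*}

lemma dist_toLp_one [Fintype κ] (x y : κ → ℝ) :
    dist (WithLp.toLp 1 x) (WithLp.toLp 1 y) = ∑ k, |x k - y k| := by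
  simp [PiLp.dist_eq_of_L1, Real.dist_eq]

lemma toLp_one_mem_convexHull {v : ι → κ → ℝ} {θ : κ → ℝ}
    (hθ : θ ∈ convexHull ℝ (Set.range v)) :
    WithLp.toLp 1 θ ∈ convexHull ℝ (Set.range fun i => WithLp.toLp 1 (v i)) := by
  have h := (WithLp.linearEquiv 1 ℝ (κ → ℝ)).symm.toLinearMap.image_convexHull (Set.range v)
  simp only [LinearEquiv.coe_coe, WithLp.coe_symm_linearEquiv] at h
  rw [Set.range_comp' (WithLp.toLp 1) v, ← h]
  exact Set.mem_image_of_mem _ hθ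

lemma sum_sq_sum_abs_sub_le_of_mem_convexHull [Fintype ι] [Fintype κ] {v : ι → κ → ℝ}
    {θ : κ → ℝ} (hθ : θ ∈ convexHull ℝ (Set.range v)) :
    ∑ i, (∑ k, |θ k - v i k|) ^ 2 ≤ (∑ i, ∑ j, ∑ k, |v i k - v j k|) ^ 2 := by
  have h := sum_sq_dist_le_sq_sum_dist_of_mem_convexHull (E := PiLp 1 fun _ : κ => ℝ)
    (toLp_one_mem_convexHull hθ)
  simpa only [dist_toLp_one] using h

end L1

section Deviation

variable {Ω : Type*} [MeasurableSpace Ω] {μ : Measure Ω}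

lemma ofReal_one_sub_le_of_measure_compl_le [IsProbabilityMeasure μ] {s : Set Ω} {δ : ℝ}
    (hδ : 0 ≤ δ) (hs : μ sᶜ ≤ ENNReal.ofReal δ) : ENNReal.ofReal (1 - δ) ≤ μ s := by
  rw [ENNReal.ofReal_sub _ hδ, ENNReal.ofReal_one, tsub_le_iff_right, ← measure_univ (μ := μ)]
  exact (measure_univ_le_add_compl s).trans (by gcongr)

lemma measure_lt_integral_sub_sqrt_le [IsFiniteMeasure μ] {Y : Ω → ℝ} (hY : MemLp Y 2 μ)
    {v δ : ℝ} (hv : variance Y μ ≤ v) (hδ : 0 < δ) :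
    μ {ω | Y ω < μ[Y] - √(v / δ)} ≤ ENNReal.ofReal δ := by
  rcases (Real.sqrt_nonneg (v / δ)).eq_or_lt with h0 | hpos
  · have hv0 : v ≤ 0 := by
      have := Real.sqrt_eq_zero'.mp h0.symm
      simpa using (div_le_iff₀ hδ).mp this
    have hvar0 : evariance Y μ = 0 := by
      rw [← hY.ofReal_variance_eq, le_antisymm (hv.trans hv0) (variance_nonneg Y μ),
        ENNReal.ofReal_zero]
    have hconst := (evariance_eq_zero_iff hY.aemeasurable).mp hvar0
    refine le_of_eq_of_le (measure_eq_zero_iff_ae_notMem.mpr ?_) zero_le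
    filter_upwards [hconst] with ω hω
    simp [hω, ← h0]
  · calc μ {ω | Y ω < μ[Y] - √(v / δ)} ≤ μ {ω | √(v / δ) ≤ |Y ω - μ[Y]|} :=
          measure_mono fun ω (hω : Y ω < _) =>
            le_abs.mpr (Or.inr (by linarith : √(v / δ) ≤ -(Y ω - μ[Y])))
      _ ≤ ENNReal.ofReal (variance Y μ / √(v / δ) ^ 2) := meas_ge_le_variance_div_sq hY hpos
      _ ≤ ENNReal.ofReal δ := by
          have hvδ : 0 < v / δ := Real.sqrt_pos.mp hpos
          refine ENNReal.ofReal_le_ofReal ?_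
          rw [Real.sq_sqrt hvδ.le, div_le_iff₀ hvδ]
          calc variance Y μ ≤ v := hv
            _ = δ * (v / δ) := by field_simp

lemma measure_sampleMean_lt_le [IsProbabilityMeasure μ] {ι : Type*} [Fintype ι]
    {X : ι → Ω → ℝ} (hindep : iIndepFun X μ) {i₀ : ι}
    (hident : ∀ i, IdentDistrib (X i) (X i₀) μ μ) (hL2 : MemLp (X i₀) 2 μ) {σ δ : ℝ}
    (hσ : 0 ≤ σ) (hvar : variance (X i₀) μ ≤ σ ^ 2) (hδ : 0 < δ) :
    μ {ω | (∑ i, X i ω) / Fintype.card ι < μ[X i₀] - σ / √(Fintype.card ι * δ)} ≤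
      ENNReal.ofReal δ := by
  have hN : (0 : ℝ) < Fintype.card ι := Nat.cast_pos.mpr (Fintype.card_pos_iff.mpr ⟨i₀⟩)
  have hL2i : ∀ i, MemLp (X i) 2 μ := fun i => (hident i).symm.memLp_snd hL2
  have hL2mean : MemLp (fun ω => (∑ i, X i ω) / Fintype.card ι) 2 μ := by
    simpa only [div_eq_mul_inv] using
      (memLp_finsetSum _ fun i _ => hL2i i).mul_const (Fintype.card ι : ℝ)⁻¹
  have hmean : μ[fun ω => (∑ i, X i ω) / Fintype.card ι] = μ[X i₀] := by
    rw [integral_div, integral_finsetSum _ fun i _ => (hL2i i).integrable one_le_two]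
    simp only [fun i => (hident i).integral_eq, sum_const, card_univ, nsmul_eq_mul]
    field_simp
  have hvarMean :
      variance (fun ω => (∑ i, X i ω) / Fintype.card ι) μ ≤ σ ^ 2 / Fintype.card ι := by
    have hsum : (fun ω => ∑ i, X i ω) = ∑ i, X i := funext fun ω => (sum_apply ω _ _).symm
    simp only [div_eq_mul_inv, variance_mul_const, hsum]
    rw [IndepFun.variance_sum (fun i _ => hL2i i) fun i _ j _ hij => hindep.indepFun hij]
    simp only [fun i => (hident i).variance_eq, sum_const, card_univ, nsmul_eq_mul]
    calc (Fintype.card ι : ℝ) * variance (X i₀) μ * (Fintype.card ι : ℝ)⁻¹ ^ 2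
        = variance (X i₀) μ * (Fintype.card ι : ℝ)⁻¹ := by field_simp
      _ ≤ σ ^ 2 * (Fintype.card ι : ℝ)⁻¹ := by gcongr
  have hdev := measure_lt_integral_sub_sqrt_le hL2mean hvarMean hδ
  rwa [hmean, div_div, Real.sqrt_div' _ (by positivity), Real.sqrt_sq hσ] at hdev

end Deviation

theorem stmt_10_general {Ω : Type*} [MeasurableSpace Ω] (μ : Measure Ω)
    [IsProbabilityMeasure μ]
    (n m : ℕ) (hn : 0 < n)
    (H σ δ : ℝ) (hH : 0 ≤ H) (hσ : 0 ≤ σ) (hδ : δ ∈ Set.Ioc (0 : ℝ) 1)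
    (T : Fin n → Ω → (Fin m → ℝ))
    (hindep : iIndepFun T μ)
    (hident : ∀ i : Fin n, IdentDistrib (T i) (T ⟨0, hn⟩) μ μ)
    (θstar : Fin m → ℝ)
    (X : Fin n → Ω → ℝ)
    (hX : ∀ i ω, X i ω = (H / 2) * (∑ k : Fin m, |θstar k - T i ω k|) ^ 2)
    (hL2 : MemLp (X ⟨0, hn⟩) 2 μ)
    (hvar : variance (X ⟨0, hn⟩) μ ≤ σ ^ 2)
    (Lbar : ℝ) (hLbar : Lbar ≤ ∫ ω, X ⟨0, hn⟩ ω ∂μ)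
    (hhull : ∀ᵐ ω ∂μ, θstar ∈ convexHull ℝ (Set.range (fun i : Fin n => T i ω)))
    (Ψ : Ω → ℝ)
    (hΨ : ∀ ω, Ψ ω = (Real.sqrt H / (n : ℝ) ^ 2) *
      ∑ i : Fin n, ∑ j : Fin n, ∑ k : Fin m, |T i ω k - T j ω k|) :
    ENNReal.ofReal (1 - δ) ≤
      μ {ω | Lbar ≤ ((n : ℝ) ^ 3 / 2) * Ψ ω ^ 2 + σ / Real.sqrt (n * δ)} := by
  set g : (Fin m → ℝ) → ℝ := fun v => (H / 2) * (∑ k, |θstar k - v k|) ^ 2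
  have hg : Measurable g := by fun_prop
  have hXT : X = fun i => g ∘ T i := funext fun i => funext (hX i)
  have hdev := measure_sampleMean_lt_le (hXT ▸ hindep.comp _ fun _ => hg)
    (fun i => hXT ▸ (hident i).comp hg) hL2 hσ hvar hδ.1
  rw [Fintype.card_fin] at hdev
  refine ofReal_one_sub_le_of_measure_compl_le hδ.1.le (le_trans (measure_mono_ae ?_) hdev)
  filter_upwards [hhull] with ω hω hfail
  have hmean : (∑ i, X i ω) / n ≤ ((n : ℝ) ^ 3 / 2) * Ψ ω ^ 2 :=
    calc (∑ i, X i ω) / n = H / 2 * (∑ i, (∑ k, |θstar k - T i ω k|) ^ 2) / n := by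
          simp only [hX, ← mul_sum]
      _ ≤ H / 2 * (∑ i, ∑ j, ∑ k, |T i ω k - T j ω k|) ^ 2 / n := by
          gcongr; exact sum_sq_sum_abs_sub_le_of_mem_convexHull hω
      _ = ((n : ℝ) ^ 3 / 2) * Ψ ω ^ 2 := by
          rw [hΨ, mul_pow, div_pow, Real.sq_sqrt hH]; field_simp
  have hviolated : ¬ Lbar ≤ (n : ℝ) ^ 3 / 2 * Ψ ω ^ 2 + σ / √(n * δ) := hfail
  show (∑ i, X i ω) / n < _
  linarith

/-- Theorem 3: with probability at least `1 − δ` over the draw of the `n` i.i.d.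
sample-wise local optima `Tᵢ`, the true population loss `L̄` of the trained
optimum `θ*` (which satisfies `L̄ ≤ 𝔼[(H/2)·‖θ* − T₁‖₁²]`, where the variance of
`(H/2)·‖θ* − T₁‖₁²` is at most `σ²` and `θ*` almost surely lies in the convex
hull of the `Tᵢ`) is bounded by `(n³/2)·Ψ² + σ/√(nδ)`, where
`Ψ = (√H / n²) ∑ i j, ‖Tᵢ − Tⱼ‖₁` and `‖v‖₁ = ∑ k, |v k|`. -/
theorem stmt_10 {Ω : Type*} [MeasurableSpace Ω] (μ : Measure Ω)
    [IsProbabilityMeasure μ]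
    (n m : ℕ) (hn : 0 < n) (hm : 0 < m)
    (H σ δ : ℝ) (hH : 0 ≤ H) (hσ : 0 ≤ σ) (hδ : δ ∈ Set.Ioc (0 : ℝ) 1)
    (T : Fin n → Ω → (Fin m → ℝ))
    (hindep : iIndepFun T μ)
    (hident : ∀ i : Fin n, IdentDistrib (T i) (T ⟨0, hn⟩) μ μ)
    (θstar : Fin m → ℝ)
    (X : Fin n → Ω → ℝ)
    (hX : ∀ i ω, X i ω = (H / 2) * (∑ k : Fin m, |θstar k - T i ω k|) ^ 2)
    (hL2 : MemLp (X ⟨0, hn⟩) 2 μ)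
    (hvar : variance (X ⟨0, hn⟩) μ ≤ σ ^ 2)
    (Lbar : ℝ) (hLbar : Lbar ≤ ∫ ω, X ⟨0, hn⟩ ω ∂μ)
    (hhull : ∀ᵐ ω ∂μ, θstar ∈ convexHull ℝ (Set.range (fun i : Fin n => T i ω)))
    (Ψ : Ω → ℝ)
    (hΨ : ∀ ω, Ψ ω = (Real.sqrt H / (n : ℝ) ^ 2) *
      ∑ i : Fin n, ∑ j : Fin n, ∑ k : Fin m, |T i ω k - T j ω k|) :
    ENNReal.ofReal (1 - δ) ≤
      μ {ω | Lbar ≤ ((n : ℝ) ^ 3 / 2) * Ψ ω ^ 2 + σ / Real.sqrt (n * δ)} :=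
  stmt_10_general μ n m hn H σ δ hH hσ hδ T hindep hident θstar X hX hL2 hvar Lbar hLbar hhull Ψ hΨ
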